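/- The coefficient of z³ in the formal power series (log(1+z)/z)^{24} is an integer (equivalently, u_3 ≡ 0 modulo ℤ). -/

import Mathlib

/-!
Writing `f = 1 + a z + b z² + c z³ + O(z⁴)`, the multinomial theorem gives
`[z³] f^n = n c + n(n-1) a b + C(n,3) a³`. For `log(1+z)/z` one has `a = -1/2`, `b = 1/3`,
`c = -1/4`, and for `n = 24` this is `-6 - 92 - 253 = -351`.
-/

open PowerSeries

/-- The formal power series `log(1+z)/z = ∑_{n≥0} (-1)^n z^n/(n+1)` over `ℚ`. -/
noncomputable def logDiv : PowerSeries ℚ :=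
  PowerSeries.mk fun n => (-1 : ℚ) ^ n / (n + 1)

section
variable {R : Type*} [CommRing R]

theorem coeff_mul_of_constantCoeff_eq_one {f g : R⟦X⟧} (hf : constantCoeff f = 1)
    (hg : constantCoeff g = 1) :
    coeff 1 (f * g) = coeff 1 f + coeff 1 g ∧
    coeff 2 (f * g) = coeff 2 f + coeff 1 f * coeff 1 g + coeff 2 g ∧
    coeff 3 (f * g) = coeff 3 f + coeff 2 f * coeff 1 g + coeff 1 f * coeff 2 g + coeff 3 g := by
  rw [← coeff_zero_eq_constantCoeff_apply] at hf hg
  refine ⟨?_, ?_, ?_⟩ <;> simp [coeff_mul, Finset.Nat.antidiagonal_succ, hf, hg] <;> ring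

theorem coeff_pow_of_constantCoeff_eq_one {f : R⟦X⟧} (hf : constantCoeff f = 1) (n : ℕ) :
    coeff 1 (f ^ n) = n * coeff 1 f ∧
    coeff 2 (f ^ n) = n * coeff 2 f + n.choose 2 * coeff 1 f ^ 2 ∧
    coeff 3 (f ^ n) = n * coeff 3 f + 2 * n.choose 2 * coeff 1 f * coeff 2 f +
      n.choose 3 * coeff 1 f ^ 3 := by
  induction n with
  | zero => simp [coeff_one]
  | succ n ih =>
    obtain ⟨h1, h2, h3⟩ := ih
    have hfn : constantCoeff (f ^ n) = 1 := by rw [map_pow, hf, one_pow]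
    obtain ⟨m1, m2, m3⟩ := coeff_mul_of_constantCoeff_eq_one hfn hf
    refine ⟨?_, ?_, ?_⟩ <;>
      simp only [pow_succ, m1, m2, m3, h1, h2, h3, Nat.choose_succ_succ', Nat.choose_one_right]
        <;> push_cast <;> ring

end

/-- The coefficient of `z³` in `(log(1+z)/z)^{24}` is an integer (with `M_3 = 24`, this
says `u_3 ≡ 0` modulo `ℤ`). -/
theorem u_three : ∃ m : ℤ, PowerSeries.coeff (R := ℚ) 3 (logDiv ^ 24) = m := by
  have h0 : constantCoeff logDiv = 1 := by simp [logDiv]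
  refine ⟨-351, ?_⟩
  rw [(coeff_pow_of_constantCoeff_eq_one h0 24).2.2]
  norm_num [logDiv, Nat.choose]
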